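/- arXiv:1811.11474 — 2 statements merged into one kernel-verified Lean document; each statement's English description precedes it below -/
import Mathlib

section
/- Any quadrature rule with weights w₀ = κ/(D+κ), w_d = w_{D+d} = 1/(2(D+κ)) and sigma-points ξ⁽⁰⁾ = 0, ξ⁽ᵈ⁾ = √(D+κ) e_d, ξ⁽ᴰ⁺ᵈ⁾ = −√(D+κ) e_d integrates exactly every polynomial on ℝ^D of total degree at most three against the standard Gaussian density N(0, I_D). -/
open MeasureTheory Real Finset

/-- Standard multivariate Gaussian density on `Fin D → ℝ`. -/
noncomputable def stdGaussianPdf (D : ℕ) (x : Fin D → ℝ) : ℝ :=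
  ((Real.sqrt (2 * Real.pi))⁻¹) ^ D * Real.exp (-(∑ d, x d ^ 2) / 2)

/-- The unscented-transform sigma-points with scaling `c = D + κ`. -/
noncomputable def utPoint (D : ℕ) (c : ℝ) : Fin (2 * D + 1) → Fin D → ℝ := fun n d =>
  if n.val = 0 then 0
  else if n.val ≤ D then (if d.val = n.val - 1 then Real.sqrt c else 0)
  else (if d.val = n.val - D - 1 then -Real.sqrt c else 0)

/-- The unscented-transform weights. -/
noncomputable def utWeight (D : ℕ) (κ : ℝ) : Fin (2 * D + 1) → ℝ := fun n =>
  if n.val = 0 then κ / (D + κ) else 1 / (2 * (D + κ))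

/-!
Both sides are linear in `p`, so it suffices to compare them on monomials `x ^ α` with
`|α| ≤ 3`. The Gaussian integral of a monomial factors into one-dimensional moments, and both
the Gaussian and the sigma-point set are symmetric under `x_i ↦ -x_i`; hence both sides vanish
as soon as some exponent `α i` is odd. The only monomials of degree at most three with all
exponents even are `1` and `x_i ^ 2`, and the weights are exactly those for which the rule
gives both of them their Gaussian mean `1`.
-/

open ProbabilityTheory
open scoped NNReal

lemma Finsupp.eq_zero_or_eq_single_two_of_even {ι : Type*} [Fintype ι] (α : ι →₀ ℕ)
    (heven : ∀ i, Even (α i)) (hα : ∑ i, α i ≤ 3) : α = 0 ∨ ∃ i, α = Finsupp.single i 2 := by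
  refine or_iff_not_imp_left.2 fun hne => ?_
  obtain ⟨i, hi⟩ := Finsupp.ne_iff.1 hne
  have hi3 : α i ≤ 3 := (Finset.single_le_sum (by simp) (Finset.mem_univ i)).trans hα
  have hpair : ∀ j, j ≠ i → α i + α j ≤ 3 := fun j hj =>
    (Finset.add_le_sum (by simp) (Finset.mem_univ i) (Finset.mem_univ j) hj.symm).trans hα
  refine ⟨i, Finsupp.ext fun j => ?_⟩
  have := heven i
  have := heven j
  rcases eq_or_ne j i with rfl | hj
  · simp only [Finsupp.coe_zero, Pi.zero_apply, Finsupp.single_eq_same] at hi ⊢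
    grind
  · have := hpair j hj
    simp only [Finsupp.single_eq_of_ne hj]
    grind

lemma Fintype.prod_pow_finsuppSingle {ι R : Type*} [Fintype ι] [DecidableEq ι] [CommMonoid R]
    (x : ι → R) (i : ι) (k : ℕ) : ∏ j, x j ^ Finsupp.single i k j = x i ^ k :=
  (Finset.prod_eq_single i (fun j _ hj => by simp [Finsupp.single_eq_of_ne hj]) (by simp)).trans
    (by simp)

lemma prod_pi_single_pow {ι R : Type*} [Fintype ι] [DecidableEq ι] [CommMonoidWithZero R]
    (d : ι) (s : R) (α : ι →₀ ℕ) :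
    ∏ i, (Pi.single d s : ι → R) i ^ α i = if α.support ⊆ {d} then s ^ α d else 0 := by
  split_ifs with h
  · refine (Finset.prod_eq_single d (fun i _ hi => ?_) (by simp)).trans (by simp)
    have : α i = 0 := Finsupp.notMem_support_iff.1 fun hmem => hi (by simpa using h hmem)
    simp [this]
  · obtain ⟨i, hi, hid⟩ := Finset.not_subset.1 h
    refine Finset.prod_eq_zero (Finset.mem_univ i) ?_
    rw [Pi.single_eq_of_ne (by simpa using hid), zero_pow (Finsupp.mem_support_iff.1 hi)]

lemma sum_fin_two_mul_add_one {M : Type*} [AddCommMonoid M] (D : ℕ) (f : Fin (2 * D + 1) → M) :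
    ∑ n, f n = f 0 + ∑ i : Fin D, (f ⟨i + 1, by omega⟩ + f ⟨D + i + 1, by omega⟩) := by
  rw [Fin.sum_univ_succ, ← (finCongr (two_mul D)).symm.sum_comp, Fin.sum_univ_add,
    ← Finset.sum_add_distrib]
  rfl

lemma sum_mul_eval_eq {ι σ : Type*} [Fintype ι] [Fintype σ] (w : ι → ℝ) (ξ : ι → σ → ℝ)
    (p : MvPolynomial σ ℝ) :
    ∑ n, w n * MvPolynomial.eval (ξ n) p =
      ∑ α ∈ p.support, p.coeff α * ∑ n, w n * ∏ i, ξ n i ^ α i := by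
  simp_rw [MvPolynomial.eval_eq', Finset.mul_sum]
  rw [Finset.sum_comm]
  refine Finset.sum_congr rfl fun α _ => Finset.sum_congr rfl fun n _ => ?_
  ring
section GaussianMoments

variable {v : ℝ≥0}

lemma integrable_pow_mul_gaussianPDFReal (μ : ℝ) (hv : v ≠ 0) (k : ℕ) :
    Integrable (fun t => t ^ k * gaussianPDFReal μ v t) := by
  have h : Integrable (fun t : ℝ => t ^ k) (gaussianReal μ v) :=
    integrable_pow_of_mem_interior_integrableExpSet (X := fun t => t) (by simp) k
  rw [gaussianReal_of_var_ne_zero μ hv, integrable_withDensity_iff (measurable_gaussianPDF μ v)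
    (ae_of_all _ fun _ => gaussianPDF_lt_top)] at h
  simpa only [toReal_gaussianPDF] using h

lemma integral_pow_mul_gaussianPDFReal (μ : ℝ) (hv : v ≠ 0) (k : ℕ) :
    ∫ t, t ^ k * gaussianPDFReal μ v t = ∫ t, t ^ k ∂gaussianReal μ v := by
  simp_rw [integral_gaussianReal_eq_integral_smul hv, smul_eq_mul, mul_comm]

lemma integral_pow_gaussianReal_zero_of_odd {k : ℕ} (hk : Odd k) :
    ∫ t, t ^ k ∂gaussianReal 0 v = 0 := by
  have hsymm : ∫ t, t ^ k ∂gaussianReal 0 v = ∫ t, (-t) ^ k ∂gaussianReal 0 v := by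
    conv_lhs => rw [← neg_zero, ← gaussianReal_map_neg]
    rw [integral_map (by fun_prop) (by fun_prop)]
  simp only [hk.neg_pow, integral_neg] at hsymm
  linarith

lemma integral_sq_gaussianReal_zero : ∫ t, t ^ 2 ∂gaussianReal 0 v = v := by
  rw [← variance_of_integral_eq_zero measurable_id'.aemeasurable (by simp),
    variance_fun_id_gaussianReal]

end GaussianMoments

section StdGaussian

variable {D : ℕ}

lemma stdGaussianPdf_eq_prod (x : Fin D → ℝ) :
    stdGaussianPdf D x = ∏ d, gaussianPDFReal 0 1 (x d) := by
  simp only [stdGaussianPdf, gaussianPDFReal, Finset.prod_mul_distrib, Finset.prod_const,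
    Finset.card_univ, Fintype.card_fin, ← Real.exp_sum, ← Finset.sum_div, ← Finset.sum_neg_distrib]
  norm_num

lemma monomial_mul_stdGaussianPdf (α : Fin D →₀ ℕ) (x : Fin D → ℝ) :
    (∏ d, x d ^ α d) * stdGaussianPdf D x = ∏ d, x d ^ α d * gaussianPDFReal 0 1 (x d) := by
  rw [stdGaussianPdf_eq_prod, Finset.prod_mul_distrib]

lemma integrable_monomial_mul_stdGaussianPdf (α : Fin D →₀ ℕ) :
    Integrable (fun x : Fin D → ℝ => (∏ d, x d ^ α d) * stdGaussianPdf D x) := by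
  simp_rw [monomial_mul_stdGaussianPdf]
  exact Integrable.fintype_prod (f := fun d t => t ^ α d * gaussianPDFReal 0 1 t)
    fun d => integrable_pow_mul_gaussianPDFReal 0 one_ne_zero (α d)

lemma integral_monomial_mul_stdGaussianPdf (α : Fin D →₀ ℕ) :
    ∫ x : Fin D → ℝ, (∏ d, x d ^ α d) * stdGaussianPdf D x =
      ∏ d, ∫ t, t ^ α d ∂gaussianReal 0 1 := by
  simp_rw [monomial_mul_stdGaussianPdf, ← integral_pow_mul_gaussianPDFReal 0 one_ne_zero]
  exact integral_fintype_prod_eq_prod fun d t => t ^ α d * gaussianPDFReal 0 1 t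

lemma integral_eval_mul_stdGaussianPdf (p : MvPolynomial (Fin D) ℝ) :
    ∫ x, MvPolynomial.eval x p * stdGaussianPdf D x =
      ∑ α ∈ p.support, p.coeff α * ∏ d, ∫ t, t ^ α d ∂gaussianReal 0 1 := by
  simp_rw [MvPolynomial.eval_eq', Finset.sum_mul, mul_assoc]
  rw [integral_finsetSum _ fun α _ => (integrable_monomial_mul_stdGaussianPdf α).const_mul _]
  simp_rw [integral_const_mul, integral_monomial_mul_stdGaussianPdf]

end StdGaussian

section UnscentedTransform

variable {D : ℕ} {κ : ℝ}

noncomputable def utRule (D : ℕ) (κ : ℝ) (g : (Fin D → ℝ) → ℝ) : ℝ :=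
  ∑ n, utWeight D κ n * g (utPoint D (D + κ) n)

lemma utRule_eq (g : (Fin D → ℝ) → ℝ) :
    utRule D κ g = κ / (D + κ) * g 0 + 1 / (2 * (D + κ)) *
      ∑ d, (g (Pi.single d (√(D + κ))) + g (Pi.single d (-√(D + κ)))) := by
  have hpos : ∀ i : Fin D, utPoint D (D + κ) ⟨i + 1, by omega⟩ = Pi.single i (√(D + κ)) :=
    fun i => funext fun d => by simp [utPoint, Pi.single_apply, Fin.ext_iff]
  have hneg : ∀ i : Fin D, utPoint D (D + κ) ⟨D + i + 1, by omega⟩ = Pi.single i (-√(D + κ)) :=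
    fun i => funext fun d => by
      simp [utPoint, Pi.single_apply, Fin.ext_iff, show D + (i : ℕ) + 1 - D - 1 = i by omega]
  have hzero : utPoint D (D + κ) 0 = 0 := funext fun d => by simp [utPoint]
  rw [utRule, sum_fin_two_mul_add_one, Finset.mul_sum]
  simp [hzero, hpos, hneg, utWeight, mul_add]

lemma utRule_monomial_of_odd (α : Fin D →₀ ℕ) {i : Fin D} (hi : Odd (α i)) :
    utRule D κ (fun x => ∏ j, x j ^ α j) = 0 := by
  have hi0 : α i ≠ 0 := fun h => by simp [h] at hi
  have hzero : ∏ j, (0 : ℝ) ^ α j = 0 :=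
    Finset.prod_eq_zero (Finset.mem_univ i) (by simp [hi0])
  have hpair : ∀ d, ∏ j, (Pi.single d (√(D + κ)) : Fin D → ℝ) j ^ α j +
      ∏ j, (Pi.single d (-√(D + κ)) : Fin D → ℝ) j ^ α j = 0 := by
    intro d
    simp only [prod_pi_single_pow]
    split_ifs with h
    · obtain rfl : i = d := by simpa using h (Finsupp.mem_support_iff.2 hi0)
      rw [hi.neg_pow, add_neg_cancel]
    · simp
  simp [utRule_eq, hzero, hpair]

lemma utRule_one (hκ : 0 < D + κ) : utRule D κ (fun _ => 1) = 1 := by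
  rw [utRule_eq]
  field_simp
  simp
  ring

lemma utRule_sq (hκ : 0 < D + κ) (i : Fin D) : utRule D κ (fun x => x i ^ 2) = 1 := by
  rw [utRule_eq]
  simp [Pi.single_apply, Real.sq_sqrt hκ.le, ← two_mul]
  field_simp

lemma utRule_monomial_eq_integral (hκ : 0 < D + κ) (α : Fin D →₀ ℕ)
    (hα : ∑ i, α i ≤ 3) :
    utRule D κ (fun x => ∏ j, x j ^ α j) = ∏ d, ∫ t, t ^ α d ∂gaussianReal 0 1 := by
  by_cases hodd : ∃ i, Odd (α i)
  · obtain ⟨i, hi⟩ := hodd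
    rw [utRule_monomial_of_odd α hi,
      Finset.prod_eq_zero (Finset.mem_univ i) (integral_pow_gaussianReal_zero_of_odd hi)]
  simp only [not_exists, Nat.not_odd_iff_even] at hodd
  rcases α.eq_zero_or_eq_single_two_of_even hodd hα with rfl | ⟨i, rfl⟩
  · simpa using utRule_one hκ
  · simp only [Fintype.prod_pow_finsuppSingle, utRule_sq hκ]
    rw [Finset.prod_eq_single i (fun j _ hj => by simp [Finsupp.single_eq_of_ne hj]) (by simp)]
    simp [integral_sq_gaussianReal_zero]

end UnscentedTransform

theorem ut_exact_degree_three_general (D : ℕ) (κ : ℝ) (hκ : (D : ℝ) + κ > 0)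
    (p : MvPolynomial (Fin D) ℝ) (hp : p.totalDegree ≤ 3) :
    ∑ n, utWeight D κ n * MvPolynomial.eval (utPoint D ((D : ℝ) + κ) n) p =
      ∫ x : Fin D → ℝ, MvPolynomial.eval x p * stdGaussianPdf D x := by
  rw [sum_mul_eval_eq, integral_eval_mul_stdGaussianPdf]
  refine Finset.sum_congr rfl fun α hα => congrArg _ ?_
  have hdeg : ∑ i, α i ≤ 3 := by
    rw [← Finsupp.sum_fintype α (fun _ e => e) (fun _ => rfl)]
    exact (MvPolynomial.le_totalDegree hα).trans hp
  exact utRule_monomial_eq_integral hκ α hdeg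

theorem ut_exact_degree_three (D : ℕ) (hD : 1 ≤ D) (κ : ℝ) (hκ : (D : ℝ) + κ > 0)
    (p : MvPolynomial (Fin D) ℝ) (hp : p.totalDegree ≤ 3) :
    ∑ n, utWeight D κ n * MvPolynomial.eval (utPoint D ((D : ℝ) + κ) n) p =
      ∫ x : Fin D → ℝ, MvPolynomial.eval x p * stdGaussianPdf D x :=
  ut_exact_degree_three_general D κ hκ p hp
end

section
/- For the standard one-dimensional Gaussian and parameters ℓ > 0, s ∈ ℝ, α ∈ ℕ: ∫_ℝ x^α exp(−(x−s)²/(2ℓ²)) (1/√(2π)) e^{−x²/2} dx = √(ℓ²/(1+ℓ²)) · exp(−s²/(2(1+ℓ²))) · E[(σZ + μ)^α], where Z ~ N(0,1), σ² = ℓ²/(1+ℓ²), μ = s/(1+ℓ²). -/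
open MeasureTheory Real

theorem rbf_monomial_cross_moment (ℓ s : ℝ) (hℓ : 0 < ℓ) (α : ℕ) :
    ∫ x : ℝ, x ^ α * Real.exp (-(x - s) ^ 2 / (2 * ℓ ^ 2)) *
        ((Real.sqrt (2 * Real.pi))⁻¹ * Real.exp (-x ^ 2 / 2)) =
      Real.sqrt (ℓ ^ 2 / (1 + ℓ ^ 2)) * Real.exp (-s ^ 2 / (2 * (1 + ℓ ^ 2))) *
        ∫ z : ℝ, (Real.sqrt (ℓ ^ 2 / (1 + ℓ ^ 2)) * z + s / (1 + ℓ ^ 2)) ^ α *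
          ((Real.sqrt (2 * Real.pi))⁻¹ * Real.exp (-z ^ 2 / 2)) := by
  have h1 : (0:ℝ) < 1 + ℓ ^ 2 := by positivity
  set σ := Real.sqrt (ℓ ^ 2 / (1 + ℓ ^ 2)) with hσdef
  have hσpos : 0 < σ := Real.sqrt_pos.mpr (by positivity)
  have hσsq : σ ^ 2 = ℓ ^ 2 / (1 + ℓ ^ 2) := Real.sq_sqrt (by positivity)
  set μ := s / (1 + ℓ ^ 2) with hμdef
  set c := Real.exp (-s ^ 2 / (2 * (1 + ℓ ^ 2))) with hcdef
  set g : ℝ → ℝ := fun x => x ^ α *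
      ((Real.sqrt (2 * Real.pi))⁻¹ * Real.exp (-(x - μ) ^ 2 / (2 * σ ^ 2))) with hgdef
  have hexp : ∀ x : ℝ, Real.exp (-(x - s) ^ 2 / (2 * ℓ ^ 2)) * Real.exp (-x ^ 2 / 2)
      = c * Real.exp (-(x - μ) ^ 2 / (2 * σ ^ 2)) := by
    intro x
    rw [hcdef, ← Real.exp_add, ← Real.exp_add]
    congr 1
    rw [hσsq, hμdef]
    field_simp
    ring
  have hLHS : (∫ x : ℝ, x ^ α * Real.exp (-(x - s) ^ 2 / (2 * ℓ ^ 2)) *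
      ((Real.sqrt (2 * Real.pi))⁻¹ * Real.exp (-x ^ 2 / 2))) = c * ∫ x, g x := by
    rw [← integral_const_mul]
    congr 1
    funext x
    simp only [hgdef]
    linear_combination (x ^ α * (Real.sqrt (2 * Real.pi))⁻¹) * hexp x
  have hcomp : ∀ z : ℝ, (σ * z + μ) ^ α *
      ((Real.sqrt (2 * Real.pi))⁻¹ * Real.exp (-z ^ 2 / 2)) = g (σ * z + μ) := by
    intro z
    simp only [hgdef]
    congr 3
    rw [add_sub_cancel_right, mul_pow, hσsq]
    field_simp
  have hRHS : (∫ z : ℝ, (σ * z + μ) ^ α *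
      ((Real.sqrt (2 * Real.pi))⁻¹ * Real.exp (-z ^ 2 / 2))) = σ⁻¹ * ∫ x, g x := by
    simp_rw [hcomp]
    have h2 : (∫ z : ℝ, g (σ * z + μ)) = |σ⁻¹| • ∫ y : ℝ, g (y + μ) :=
      Measure.integral_comp_mul_left (fun y => g (y + μ)) σ
    rw [h2, integral_add_right_eq_self g μ,
      abs_of_pos (inv_pos.mpr hσpos), smul_eq_mul]
  rw [hLHS, hRHS]
  field_simp
end
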